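/- arXiv:1707.06593 — 9 statements merged into one kernel-verified Lean document; each statement's English description precedes it below -/
import Mathlib

section
/- Let (X,d_X) be a metric space, (Y,ρ_Y) a quasi-metric space (ρ_Y nonnegative, symmetric, vanishing on the diagonal), S ⊆ X a closed subset with X \ S finite of cardinality m, and f : S → Y a Lipschitz map with Lipschitz constant Lip(f). Then for every ε > 0 there exists an extension F : X → Y of f with ρ_Y(F(x),F(x')) ≤ ((1+ε)m+1)·Lip(f)·d_X(x,x') for all x,x' ∈ X. -/
/-!
Build a retraction `r : X → S` greedily, in the manner of Prim's algorithm: repeatedly attach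
the complement point `u` closest to the current set (up to a factor `c > 1`, since infima
need not be attained) to a near-nearest point `w`, and send `u` to `w`. Following `r`
from `a` and from `b` with `r a ≠ r b`, each edge travelled is a near-minimal crossing edge of
some cut that the path from `a` to `b` also crosses, so it costs at most `c ^ m * dist a b`.
At most `m` edges are travelled in total, so
`dist (r a) (r b) ≤ dist a (r a) + dist a b + dist b (r b) ≤ (1 + m * c ^ m) * dist a b`,
and `F = f ∘ r` is the extension once `c ^ m ≤ 1 + ε`.
-/

open Metric Set Filter Topology

section TreeRetraction

variable {X : Type*} [MetricSpace X]

/-- `exists_dist_le` records the last edge `(z, r b)` of the path from `b` to `S`. -/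
structure IsTreeRetraction (S : Set X) (r : X → X) (K C : ℝ) : Prop where
  mem : ∀ x, r x ∈ S
  eq_self : ∀ s ∈ S, r s = s
  exists_dist_le : ∀ a b, r a ≠ r b → b ∉ S → ∃ z ∉ S, dist z (r b) ≤ K * dist a b
  dist_add_dist_le : ∀ a b, r a ≠ r b → dist a (r a) + dist b (r b) ≤ C * dist a b

namespace IsTreeRetraction

lemma univ : IsTreeRetraction (univ : Set X) id 1 0 where
  mem _ := mem_univ _
  eq_self _ _ := rfl
  exists_dist_le _ b _ hb := absurd (mem_univ b) hb
  dist_add_dist_le a b _ := by simp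

lemma mono {S : Set X} {r : X → X} {K C C' : ℝ} (h : IsTreeRetraction S r K C) (hC : C ≤ C') :
    IsTreeRetraction S r K C' :=
  { h with
    dist_add_dist_le := fun a b hab =>
      (h.dist_add_dist_le a b hab).trans (mul_le_mul_of_nonneg_right hC dist_nonneg) }

lemma dist_le {S : Set X} {r : X → X} {K C : ℝ} (h : IsTreeRetraction S r K C) (hC : 0 ≤ C)
    (a b : X) : dist (r a) (r b) ≤ (1 + C) * dist a b := by
  by_cases hab : r a = r b
  · rw [hab, dist_self]
    positivity
  calc dist (r a) (r b) ≤ dist a (r a) + dist a b + dist b (r b) := by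
        rw [dist_comm a]; exact dist_triangle4 _ _ _ _
    _ ≤ (1 + C) * dist a b := by linarith [h.dist_add_dist_le a b hab]

section Attach

variable {S : Set X} {r : X → X} {K C c : ℝ} {u w : X}

lemma notMem_insert (h : IsTreeRetraction (insert u S) r K C) {b : X} (hbS : b ∉ S)
    (hb : r b ≠ u) : b ∉ insert u S := by
  rintro (rfl | hbS')
  exacts [hb (h.eq_self _ (mem_insert _ _)), hbS hbS']

/-- The cut property of the new edge `(u, w)`. -/
lemma dist_attach_le (h : IsTreeRetraction (insert u S) r K C) (hK : 1 ≤ K) (hc : 0 ≤ c)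
    (hu : u ∉ S) (huw : ∀ z ∉ S, ∀ y ∈ S, dist u w ≤ c * dist z y)
    {a b : X} (ha : r a = u) (hb : r b ≠ u) : dist u w ≤ c * K * dist a b := by
  have haS : a ∉ S := fun haS => hu (by rwa [← ha, h.eq_self a (mem_insert_of_mem u haS)])
  have hrbS : r b ∈ S := (h.mem b).resolve_left hb
  by_cases hbS : b ∈ S
  · calc dist u w ≤ c * dist a b := huw a haS b hbS
      _ ≤ c * K * dist a b := by
        rw [mul_assoc]; gcongr; exact le_mul_of_one_le_left dist_nonneg hK
  · obtain ⟨z, hz, hzb⟩ := h.exists_dist_le a b (ha ▸ hb.symm) (h.notMem_insert hbS hb)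
    calc dist u w ≤ c * dist z (r b) := huw z (fun hzS => hz (mem_insert_of_mem u hzS)) _ hrbS
      _ ≤ c * K * dist a b := by rw [mul_assoc]; gcongr

lemma attach [DecidableEq X] (h : IsTreeRetraction (insert u S) r K C) (hK : 1 ≤ K) (hc : 1 ≤ c)
    (hu : u ∉ S) (hw : w ∈ S) (huw : ∀ z ∉ S, ∀ y ∈ S, dist u w ≤ c * dist z y) :
    IsTreeRetraction S (fun x => if r x = u then w else r x) (c * K) (C + c * K) := by
  have hc0 : 0 ≤ c := zero_le_one.trans hc
  have hK' : K ≤ c * K := le_mul_of_one_le_left (zero_le_one.trans hK) hc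
  have hold : ∀ x, r x ≠ u → r x ∈ S := fun x hx => (h.mem x).resolve_left hx
  -- the case where only the path from `a` uses the new edge
  have hone : ∀ a b, r a = u → r b ≠ u →
      dist a w + dist b (r b) ≤ (C + c * K) * dist a b := by
    intro a b ha hb
    have hab := h.dist_add_dist_le a b (ha ▸ hb.symm)
    have hnew := h.dist_attach_le hK hc0 hu huw ha hb
    rw [ha] at hab
    linarith [dist_triangle a u w]
  refine ⟨fun x => ?_, fun s hs => ?_, fun a b hab hbS => ?_, fun a b hab => ?_⟩
  · split_ifs with hx
    exacts [hw, hold x hx]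
  · have hrs := h.eq_self s (mem_insert_of_mem u hs)
    rw [hrs, if_neg (by rintro rfl; exact hu hs)]
  · by_cases hb : r b = u
    · have ha : r a ≠ u := fun ha => hab (by simp only [ha, hb])
      refine ⟨u, hu, ?_⟩
      simpa only [hb, if_true, dist_comm a] using h.dist_attach_le hK hc0 hu huw hb ha
    · have hab' : r a ≠ r b := fun hab' => hab (by simp only [hab'])
      obtain ⟨z, hz, hzb⟩ := h.exists_dist_le a b hab' (h.notMem_insert hbS hb)
      refine ⟨z, fun hzS => hz (mem_insert_of_mem u hzS), ?_⟩
      simp only [hb, if_false]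
      exact hzb.trans (mul_le_mul_of_nonneg_right hK' dist_nonneg)
  · by_cases ha : r a = u <;> by_cases hb : r b = u
    · exact absurd (by simp only [ha, hb]) hab
    · simpa only [ha, hb, if_true, if_false] using hone a b ha hb
    · rw [dist_comm a b, add_comm]
      simpa only [ha, hb, if_true, if_false] using hone b a hb ha
    · simp only [ha, hb, if_false] at hab ⊢
      exact (h.dist_add_dist_le a b hab).trans
        (mul_le_mul_of_nonneg_right (by linarith) dist_nonneg)

end Attach

end IsTreeRetraction

/-- Closedness makes the gap `infDist u S` positive, which leaves room for the factor `c`. -/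
lemma IsClosed.exists_dist_le_mul_dist_of_finite_compl {S : Set X} (hS : IsClosed S)
    (hne : S.Nonempty) (hfin : Sᶜ.Finite) (hcompl : Sᶜ.Nonempty) {c : ℝ} (hc : 1 < c) :
    ∃ u ∉ S, ∃ w ∈ S, ∀ z ∉ S, ∀ y ∈ S, dist u w ≤ c * dist z y := by
  obtain ⟨u, hu, hmin⟩ := Set.exists_min_image _ (infDist · S) hfin hcompl
  have hpos : 0 < infDist u S := (hS.notMem_iff_infDist_pos hne).mp hu
  obtain ⟨w, hw, huw⟩ := (infDist_lt_iff hne).mp (lt_mul_of_one_lt_left hpos hc)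
  refine ⟨u, hu, w, hw, fun z hz y hy => huw.le.trans ?_⟩
  gcongr
  exact (hmin z hz).trans (infDist_le_dist_of_mem hy)

lemma IsClosed.exists_isTreeRetraction {c : ℝ} (hc : 1 < c) :
    ∀ (n : ℕ) {S : Set X}, IsClosed S → S.Nonempty → Sᶜ.Finite → Sᶜ.ncard = n →
      ∃ r, IsTreeRetraction S r (c ^ n) (n * c ^ n)
  | 0, S, _, _, hfin, hn => by
    obtain rfl : S = univ := compl_empty_iff.mp ((ncard_eq_zero hfin).mp hn)
    simpa using ⟨id, IsTreeRetraction.univ⟩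
  | n + 1, S, hS, hne, hfin, hn => by
    classical
    obtain ⟨u, hu, w, hw, huw⟩ := hS.exists_dist_le_mul_dist_of_finite_compl hne hfin
      ((ncard_pos hfin).mp (by omega)) hc
    have hcompl : (insert u S)ᶜ = Sᶜ \ {u} := by ext; simp [and_comm]
    obtain ⟨r, hr⟩ := IsClosed.exists_isTreeRetraction hc n
      (insert_eq u S ▸ isClosed_singleton.union hS) (hne.mono (subset_insert u S))
      (hcompl ▸ hfin.sdiff)
      (by rw [hcompl, ncard_sdiff_singleton_of_mem hu, hn, Nat.add_sub_cancel])
    rw [pow_succ']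
    refine ⟨_, (hr.attach (one_le_pow₀ hc.le) hc.le hu hw huw).mono ?_⟩
    have := mul_le_mul_of_nonneg_right hc.le (by positivity : (0 : ℝ) ≤ n * c ^ n)
    push_cast
    linarith

end TreeRetraction

lemma exists_one_lt_pow_le (m : ℕ) {ε : ℝ} (hε : 0 < ε) :
    ∃ c : ℝ, 1 < c ∧ c ^ m ≤ 1 + ε := by
  have hlim : Tendsto (fun c : ℝ => c ^ m) (𝓝[>] 1) (𝓝 1) := by
    simpa using ((continuous_pow m : Continuous fun c : ℝ => c ^ m).tendsto 1).mono_left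
      nhdsWithin_le_nhds
  obtain ⟨c, hcε, hc⟩ :=
    ((hlim.eventually (ge_mem_nhds (lt_add_of_pos_right 1 hε))).and self_mem_nhdsWithin).exists
  exact ⟨c, hc, hcε⟩

theorem lipschitz_extension_finitely_many_points_general
    {X Y : Type*} [MetricSpace X] [Nonempty Y]
    (ρ : Y → Y → ℝ)
    (hρ_diag : ∀ a, ρ a a = 0)
    (S : Set X) (hS_closed : IsClosed S)
    (hfin : (Sᶜ).Finite) (m : ℕ) (hm : hfin.toFinset.card = m)
    (f : S → Y) (L : ℝ) (hL : 0 ≤ L)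
    (hf : ∀ a b : S, ρ (f a) (f b) ≤ L * dist (a : X) (b : X))
    (ε : ℝ) (hε : 0 < ε) :
    ∃ F : X → Y, (∀ s : S, F s = f s) ∧
      ∀ x x' : X, ρ (F x) (F x') ≤ ((1 + ε) * m + 1) * L * dist x x' := by
  rcases S.eq_empty_or_nonempty with rfl | hS
  · refine ⟨fun _ => Classical.arbitrary Y, fun s => s.2.elim, fun x x' => ?_⟩
    rw [hρ_diag]
    exact mul_nonneg (mul_nonneg (by positivity) hL) dist_nonneg
  obtain ⟨c, hc, hcm⟩ := exists_one_lt_pow_le m hε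
  obtain ⟨r, hr⟩ := hS_closed.exists_isTreeRetraction hc m hS hfin
    (by rw [ncard_eq_toFinset_card _ hfin, hm])
  refine ⟨fun x => f ⟨r x, hr.mem x⟩, fun s => congrArg f (Subtype.ext (hr.eq_self s s.2)),
    fun x x' => ?_⟩
  have hmc : (m : ℝ) * c ^ m ≤ (1 + ε) * m := by
    rw [mul_comm]; exact mul_le_mul_of_nonneg_right hcm m.cast_nonneg
  calc ρ (f ⟨r x, _⟩) (f ⟨r x', _⟩) ≤ L * dist (r x) (r x') := hf _ _
    _ ≤ L * ((1 + m * c ^ m) * dist x x') := by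
      gcongr; exact hr.dist_le (by positivity) x x'
    _ ≤ L * (((1 + ε) * m + 1) * dist x x') := by gcongr L * (?_ * _); linarith
    _ = ((1 + ε) * m + 1) * L * dist x x' := by ring

/-- **Lipschitz extension over finitely many points with quasi-metric target.**
If `S` is a closed subset of a metric space `X` whose complement is finite of
cardinality `m`, `ρ` is a quasi-metric on `Y` (nonnegative, symmetric, vanishing
on the diagonal), and `f : S → Y` satisfies `ρ (f a) (f b) ≤ L * dist a b`
(with `L = Lip f`), then for every `ε > 0` there is an extension `F : X → Y`
with `ρ (F x) (F x') ≤ ((1+ε)*m+1) * L * dist x x'`. -/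
theorem lipschitz_extension_finitely_many_points
    {X Y : Type*} [MetricSpace X] [Nonempty Y]
    (ρ : Y → Y → ℝ)
    (hρ_nonneg : ∀ a b, 0 ≤ ρ a b)
    (hρ_symm : ∀ a b, ρ a b = ρ b a)
    (hρ_diag : ∀ a, ρ a a = 0)
    (S : Set X) (hS_closed : IsClosed S)
    (hfin : (Sᶜ).Finite) (m : ℕ) (hm : hfin.toFinset.card = m)
    (f : S → Y) (L : ℝ) (hL : 0 ≤ L)
    (hf : ∀ a b : S, ρ (f a) (f b) ≤ L * dist (a : X) (b : X))
    (ε : ℝ) (hε : 0 < ε) :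
    ∃ F : X → Y, (∀ s : S, F s = f s) ∧
      ∀ x x' : X, ρ (F x) (F x') ≤ ((1 + ε) * m + 1) * L * dist x x' :=
  lipschitz_extension_finitely_many_points_general ρ hρ_diag S hS_closed hfin m hm f L hL hf ε hε
end

section
/- Let P_{m+1} = {0,1,…,m+1} ⊆ ℝ with the induced metric, S = Y = {0, m+1} ⊆ P_{m+1}, and f : S → Y the identity map. Then every map F : P_{m+1} → Y extending f satisfies Lip(F) ≥ (m+1)·Lip(f). -/
/-! A map from `{0, …, m+1}` to `{0, m+1}` fixing both endpoints must jump somewhere: some pair of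
consecutive integers `k, k+1` is sent to different points, hence to points at distance `m+1`,
while `k` and `k+1` are at distance `1`. -/

theorem Nat.exists_lt_ne_succ_of_ne {α : Type*} {g : ℕ → α} {n : ℕ} (h : g 0 ≠ g n) :
    ∃ k < n, g k ≠ g (k + 1) := by
  by_contra! hno_jump
  have hconst : ∀ k ≤ n, g k = g 0 := by
    intro k hk
    induction k with
    | zero => rfl
    | succ k ih => rw [← hno_jump k hk, ih (Nat.le_of_succ_le hk)]
  exact h (hconst n le_rfl).symm

theorem abs_sub_eq_of_mem_pair_of_ne {α : Type*} [Lattice α] [AddGroup α] {a b x y : α}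
    (hx : x ∈ ({a, b} : Set α)) (hy : y ∈ ({a, b} : Set α)) (hxy : x ≠ y) : |x - y| = |a - b| := by
  rcases hx with rfl | rfl <;> rcases hy with rfl | rfl
  · exact absurd rfl hxy
  · rfl
  · exact abs_sub_comm _ _
  · exact absurd rfl hxy

/-- **Sharpness of the bound `m+1`.**  Let `P = {0,1,…,m+1} ⊆ ℝ` and
`Y = {0, m+1}`.  Every map `F : P → Y` with `F 0 = 0` and `F (m+1) = m+1`
(i.e. extending the identity `f` on `{0, m+1}`, which has `Lip f = 1`)
has Lipschitz constant at least `(m+1) * Lip f = (m+1) * 1`. -/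
theorem extension_lower_bound_path
    (m : ℕ) (F : ℝ → ℝ)
    (hmaps : ∀ x ∈ {x : ℝ | ∃ k : ℕ, k ≤ m + 1 ∧ x = (k : ℝ)},
      F x ∈ ({0, ((m : ℝ) + 1)} : Set ℝ))
    (h0 : F 0 = 0) (h1 : F ((m : ℝ) + 1) = (m : ℝ) + 1)
    (L : ℝ)
    (hF : ∀ x ∈ {x : ℝ | ∃ k : ℕ, k ≤ m + 1 ∧ x = (k : ℝ)},
      ∀ y ∈ {x : ℝ | ∃ k : ℕ, k ≤ m + 1 ∧ x = (k : ℝ)},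
        |F x - F y| ≤ L * |x - y|) :
    ((m : ℝ) + 1) * 1 ≤ L := by
  have hends : F ((0 : ℕ) : ℝ) ≠ F ((m + 1 : ℕ) : ℝ) := by
    push_cast [h0, h1]
    positivity
  obtain ⟨k, hk, hjump⟩ := Nat.exists_lt_ne_succ_of_ne (g := fun k : ℕ ↦ F k) hends
  have hk_mem : (k : ℝ) ∈ {x : ℝ | ∃ k : ℕ, k ≤ m + 1 ∧ x = (k : ℝ)} := ⟨k, hk.le, rfl⟩
  have hk1_mem : ((k + 1 : ℕ) : ℝ) ∈ {x : ℝ | ∃ k : ℕ, k ≤ m + 1 ∧ x = (k : ℝ)} := ⟨k + 1, hk, rfl⟩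
  have hgap : |F k - F (k + 1 : ℕ)| = (m : ℝ) + 1 := by
    rw [abs_sub_eq_of_mem_pair_of_ne (hmaps _ hk_mem) (hmaps _ hk1_mem) hjump, zero_sub, abs_neg,
      abs_of_nonneg (by positivity)]
  have hstep : |(k : ℝ) - ((k + 1 : ℕ) : ℝ)| = 1 := by
    push_cast
    simp
  calc ((m : ℝ) + 1) * 1 = |F k - F (k + 1 : ℕ)| := by rw [hgap, mul_one]
    _ ≤ L * |(k : ℝ) - ((k + 1 : ℕ) : ℝ)| := hF _ hk_mem _ hk1_mem
    _ = L := by rw [hstep, mul_one]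
end

section
/- Let k ≥ 1 and let v_1^{(k)},…,v_{2^k}^{(k)} ∈ ℝ^{2^k−1} be the columns of the Walsh matrix W_k with its first row deleted. If w ∈ ℝ^{2^k−1} satisfies ‖v_ℓ^{(k)} − w‖_1 ≤ ‖v_ℓ^{(k)}‖_1 for all ℓ ∈ {1,…,2^k}, then w = 0. -/
/-- Reindexing equivalence `Fin (2^k) ⊕ Fin (2^k) ≃ Fin (2^(k+1))`. -/
def walshEquiv (k : ℕ) : Fin (2 ^ k) ⊕ Fin (2 ^ k) ≃ Fin (2 ^ (k + 1)) :=
  finSumFinEquiv.trans (finCongr (by rw [pow_succ, mul_two]))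

/-- The Walsh matrices: `W 0 = (1)` and `W (k+1) = [[W k, W k],[W k, -W k]]`. -/
def walsh : (k : ℕ) → Matrix (Fin (2 ^ k)) (Fin (2 ^ k)) ℝ
  | 0 => fun _ _ => 1
  | k + 1 =>
    Matrix.reindex (walshEquiv k) (walshEquiv k)
      (Matrix.fromBlocks (walsh k) (walsh k) (walsh k) (-(walsh k)))

/-- The `ℓ`-th column of `W k` with its first row deleted, a vector in `ℝ^(2^k - 1)`. -/
def walshCol (k : ℕ) (ℓ : Fin (2 ^ k)) : Fin (2 ^ k - 1) → ℝ :=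
  fun r => walsh k (Fin.cast (Nat.sub_add_cancel Nat.one_le_two_pow) r.succ) ℓ

/-!
The coordinates of `v_ℓ` are `±1`, so `|v_ℓ r - w r| ≥ 1 - v_ℓ r * w r`, and the hypothesis forces
`⟪v_ℓ, w⟫ ≥ 0` for every `ℓ`. Summed over `ℓ` these inner products vanish, since every row of `W_k`
but the first is orthogonal to the all-ones first row; hence each `⟪v_ℓ, w⟫` is `0`. So the vector
`(0, w)` lies in the kernel of `W_kᵀ`, which is trivial because `W_k W_kᵀ = 2^k I`.
-/

open Matrix

lemma walshEquiv_inl_zero (k : ℕ) : walshEquiv k (Sum.inl 0) = 0 := by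
  ext; simp [walshEquiv]

lemma walsh_zero_apply (k : ℕ) (ℓ : Fin (2 ^ k)) : walsh k 0 ℓ = 1 := by
  induction k with
  | zero => rfl
  | succ k ih =>
    obtain ⟨x, rfl⟩ := (walshEquiv k).surjective ℓ
    rw [← walshEquiv_inl_zero k]
    cases x <;> simp [walsh, ih]

lemma abs_walsh_apply (k : ℕ) (i j : Fin (2 ^ k)) : |walsh k i j| = 1 := by
  induction k with
  | zero => simp [walsh]
  | succ k ih =>
    obtain ⟨x, rfl⟩ := (walshEquiv k).surjective i
    obtain ⟨y, rfl⟩ := (walshEquiv k).surjective j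
    cases x <;> cases y <;> simp [walsh, ih]

lemma walsh_mul_transpose (k : ℕ) : walsh k * (walsh k)ᵀ = (2 ^ k : ℝ) • 1 := by
  induction k with
  | zero =>
    ext i j
    simp only [mul_apply, transpose_apply]
    fin_cases i; fin_cases j
    simp [walsh]
  | succ k ih =>
    change reindex _ _ _ * (reindex _ _ _)ᵀ = _
    rw [transpose_reindex, reindex_apply, reindex_apply, submatrix_mul_equiv,
      fromBlocks_transpose, fromBlocks_multiply]
    simp only [transpose_neg, Matrix.neg_mul, Matrix.mul_neg, neg_neg, ih, add_neg_cancel,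
      ← add_smul]
    have hblocks : ∀ c : ℝ, fromBlocks (c • 1) 0 0 (c • 1) =
        c • (1 : Matrix (Fin (2 ^ k) ⊕ Fin (2 ^ k)) (Fin (2 ^ k) ⊕ Fin (2 ^ k)) ℝ) := fun c => by
      rw [← fromBlocks_one, fromBlocks_smul, smul_zero]
    rw [hblocks, ← two_mul, ← pow_succ']
    exact congrArg ((2 : ℝ) ^ (k + 1) • ·) (submatrix_one_equiv (α := ℝ) (walshEquiv k).symm)

lemma le_dotProduct_of_sum_abs_sub_le {ι : Type*} [Fintype ι] {v w : ι → ℝ}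
    (hv : ∀ i, |v i| = 1) (h : ∑ i, |v i - w i| ≤ ∑ i, |v i|) : 0 ≤ v ⬝ᵥ w := by
  have hterm : ∀ i, |v i| - v i * w i ≤ |v i - w i| := fun i =>
    calc |v i| - v i * w i = v i * (v i - w i) := by
          rw [mul_sub, ← abs_mul_abs_self, hv i, one_mul]
      _ ≤ |v i - w i| := by simpa [abs_mul, hv i] using le_abs_self (v i * (v i - w i))
  have := (Finset.sum_le_sum fun i _ => hterm i).trans h
  rw [Finset.sum_sub_distrib] at this
  simp only [dotProduct]
  linarith

section MulTransposeEqSmulOne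

variable {m ι : Type*} [Fintype ι] [DecidableEq m] {H : Matrix m ι ℝ} {c : ℝ}

lemma sum_row_eq_zero_of_mul_transpose_eq_smul_one (hH : H * Hᵀ = c • 1) {i₀ : m}
    (h₀ : ∀ j, H i₀ j = 1) {i : m} (hi : i ≠ i₀) : ∑ j, H i j = 0 := by
  simpa [Matrix.mul_apply, h₀, hi] using congrFun₂ hH i i₀

lemma eq_zero_of_transpose_mulVec_eq_zero [Fintype m] (hH : H * Hᵀ = c • 1) (hc : c ≠ 0)
    {x : m → ℝ} (hx : Hᵀ *ᵥ x = 0) : x = 0 := by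
  have : c • x = 0 := by rw [← one_mulVec x, ← smul_mulVec, ← hH, ← mulVec_mulVec, hx, mulVec_zero]
  exact (smul_eq_zero.1 this).resolve_left hc

end MulTransposeEqSmulOne

theorem eq_zero_of_forall_sum_abs_sub_le {n : ℕ} {ι : Type*} [Fintype ι] {H : Matrix (Fin (n + 1)) ι ℝ}
    {c : ℝ} (hH : H * Hᵀ = c • 1) (hc : c ≠ 0) (h₀ : ∀ j, H 0 j = 1)
    (habs : ∀ i j, |H i j| = 1) {w : Fin n → ℝ}
    (hw : ∀ ℓ, ∑ r : Fin n, |H r.succ ℓ - w r| ≤ ∑ r : Fin n, |H r.succ ℓ|) : w = 0 := by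
  have hdot : ∀ ℓ, 0 ≤ ∑ r : Fin n, H r.succ ℓ * w r := fun ℓ =>
    le_dotProduct_of_sum_abs_sub_le (fun r => habs _ _) (hw ℓ)
  have htot : ∑ ℓ, ∑ r : Fin n, H r.succ ℓ * w r = 0 := by
    rw [Finset.sum_comm]
    refine Finset.sum_eq_zero fun r _ => ?_
    rw [← Finset.sum_mul,
      sum_row_eq_zero_of_mul_transpose_eq_smul_one hH h₀ (Fin.succ_ne_zero r), zero_mul]
  have hzero := (Finset.sum_eq_zero_iff_of_nonneg fun ℓ _ => hdot ℓ).1 htot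
  have hker : Hᵀ *ᵥ (Fin.cons 0 w : Fin (n + 1) → ℝ) = 0 := by
    ext ℓ
    simpa [mulVec, dotProduct, Fin.sum_univ_succ] using hzero ℓ (Finset.mem_univ ℓ)
  have hcons := eq_zero_of_transpose_mulVec_eq_zero hH hc hker
  exact funext fun r : Fin n => by simpa using congrFun hcons r.succ

theorem walsh_l1_center_general (k : ℕ) (w : Fin (2 ^ k - 1) → ℝ)
    (hw : ∀ ℓ : Fin (2 ^ k),
      ∑ r, |walshCol k ℓ r - w r| ≤ ∑ r, |walshCol k ℓ r|) :
    w = 0 := by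
  let e : Fin (2 ^ k - 1 + 1) ≃ Fin (2 ^ k) := finCongr (Nat.sub_add_cancel Nat.one_le_two_pow)
  have hH : (walsh k).submatrix e id * ((walsh k).submatrix e id)ᵀ = (2 ^ k : ℝ) • 1 := by
    ext i j
    simpa [mul_apply, one_apply] using congrFun₂ (walsh_mul_transpose k) (e i) (e j)
  exact eq_zero_of_forall_sum_abs_sub_le hH (by positivity) (fun j => walsh_zero_apply k j)
    (fun i j => abs_walsh_apply k _ j) hw

/-- **Geometric lemma:** if `w` in `ℝ^(2^k-1)` satisfies
`‖v_ℓ − w‖₁ ≤ ‖v_ℓ‖₁` for every `ℓ`, then `w = 0`. -/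
theorem walsh_l1_center (k : ℕ) (hk : 1 ≤ k) (w : Fin (2 ^ k - 1) → ℝ)
    (hw : ∀ ℓ : Fin (2 ^ k),
      ∑ r, |walshCol k ℓ r - w r| ≤ ∑ r, |walshCol k ℓ r|) :
    w = 0 :=
  walsh_l1_center_general k w hw
end

section
/- Let m ≥ 2 and let M be an m × m M-matrix with C = M^{-1}. If k, ℓ ∈ {1,…,m} are distinct and c_{kℓ} = 0, then for every i ∈ {1,…,m} either m_{ki} = 0 or c_{iℓ} = 0; in particular m_{kℓ} = 0. -/
/-- **Zero pattern of inverse M-matrices (Corollary 5.4 (i)).** If `M` is an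
M-matrix with inverse `C`, `k ≠ ℓ` and `c_{kℓ} = 0`, then for every `i` either
`m_{ki} = 0` or `c_{iℓ} = 0`; in particular `m_{kℓ} = 0`. -/
theorem mmatrix_zero_pattern {m : ℕ} (hm : 2 ≤ m)
    (M C : Matrix (Fin m) (Fin m) ℝ)
    (hMC : M * C = 1) (hCM : C * M = 1)
    (hoffdiag : ∀ i j, i ≠ j → M i j ≤ 0)
    (hCnonneg : ∀ i j, 0 ≤ C i j)
    (k ℓ : Fin m) (hkl : k ≠ ℓ) (hc : C k ℓ = 0) :
    (∀ i, M k i = 0 ∨ C i ℓ = 0) ∧ M k ℓ = 0 := by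
  have h0 : ∑ i, M k i * C i ℓ = 0 := by
    have := congrFun (congrFun hMC k) ℓ
    rwa [Matrix.mul_apply, Matrix.one_apply_ne hkl] at this
  have hnonpos : ∀ i ∈ Finset.univ, M k i * C i ℓ ≤ 0 := by
    intro i _
    by_cases hik : i = k
    · subst hik; rw [hc, mul_zero]
    · exact mul_nonpos_of_nonpos_of_nonneg (hoffdiag k i (fun h => hik h.symm))
        (hCnonneg i ℓ)
  have hterm : ∀ i, M k i * C i ℓ = 0 := by
    intro i
    exact (Finset.sum_eq_zero_iff_of_nonpos hnonpos).mp h0 i (Finset.mem_univ i)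
  have hmain : ∀ i, M k i = 0 ∨ C i ℓ = 0 := fun i => mul_eq_zero.mp (hterm i)
  refine ⟨hmain, ?_⟩
  -- C ℓ ℓ ≠ 0
  have hCll : C ℓ ℓ ≠ 0 := by
    intro hz
    have h1 : ∑ j, C ℓ j * M j ℓ = 1 := by
      have := congrFun (congrFun hCM ℓ) ℓ
      rwa [Matrix.mul_apply, Matrix.one_apply_eq] at this
    have : ∑ j, C ℓ j * M j ℓ ≤ 0 := by
      apply Finset.sum_nonpos
      intro j _
      by_cases hjl : j = ℓ
      · subst hjl; rw [hz, zero_mul]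
      · exact mul_nonpos_of_nonneg_of_nonpos (hCnonneg ℓ j) (hoffdiag j ℓ hjl)
    linarith
  rcases hmain ℓ with h | h
  · exact h
  · exact absurd h hCll
end

section
/- Let m ≥ 2 and let M be an m × m M-matrix with inverse C. If there exist distinct indices k ≠ ℓ with c_{kℓ} = 0, then M has at least m − 1 entries equal to zero. -/
/-- **Corollary 5.4 (iii):** if the inverse `C` of an M-matrix `M` has a
vanishing off-diagonal entry, then `M` has at least `m − 1` zero entries. -/
theorem mmatrix_many_zero_entries {m : ℕ} (hm : 2 ≤ m)
    (M C : Matrix (Fin m) (Fin m) ℝ)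
    (hMC : M * C = 1) (hCM : C * M = 1)
    (hoffdiag : ∀ i j, i ≠ j → M i j ≤ 0)
    (hCnonneg : ∀ i j, 0 ≤ C i j)
    (hvanish : ∃ k ℓ : Fin m, k ≠ ℓ ∧ C k ℓ = 0) :
    m - 1 ≤ (Finset.univ.filter
      (fun p : Fin m × Fin m => M p.1 p.2 = 0)).card := by
  obtain ⟨k, ℓ, hkl, hCkl⟩ := hvanish
  -- diagonal of C is positive
  have hCll : 0 < C ℓ ℓ := by
    have h1 : (C * M) ℓ ℓ = 1 := by rw [hCM]; simp
    rw [Matrix.mul_apply] at h1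
    have hsplit := Finset.add_sum_erase Finset.univ (fun j => C ℓ j * M j ℓ)
      (Finset.mem_univ ℓ)
    have hrest : (∑ j ∈ Finset.univ.erase ℓ, C ℓ j * M j ℓ) ≤ 0 := by
      apply Finset.sum_nonpos
      intro j hj
      have hjℓ : j ≠ ℓ := Finset.ne_of_mem_erase hj
      exact mul_nonpos_of_nonneg_of_nonpos (hCnonneg ℓ j) (hoffdiag j ℓ hjℓ)
    have hle : (1 : ℝ) ≤ C ℓ ℓ * M ℓ ℓ := by
      rw [← h1, ← hsplit]
      linarith
    rcases (hCnonneg ℓ ℓ).lt_or_eq with h | h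
    · exact h
    · exfalso; rw [← h] at hle; simp at hle; linarith
  set A : Finset (Fin m) := Finset.univ.filter (fun i => C i ℓ = 0) with hA
  have hkA : k ∈ A := by simp [hA, hCkl]
  have hℓA : ℓ ∉ A := by simp [hA]; exact ne_of_gt hCll
  -- key: for i ∈ A and j ∉ A, M i j = 0
  have key : ∀ i ∈ A, ∀ j ∉ A, M i j = 0 := by
    intro i hi j hj
    have hCiℓ : C i ℓ = 0 := by simpa [hA] using hi
    have hiℓ : i ≠ ℓ := fun h => hℓA (h ▸ hi)
    have h0 : (M * C) i ℓ = 0 := by rw [hMC]; simp [Matrix.one_apply, hiℓ]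
    rw [Matrix.mul_apply] at h0
    have hsplit := Finset.add_sum_erase Finset.univ (fun j => M i j * C j ℓ)
      (Finset.mem_univ i)
    have hdiag : M i i * C i ℓ = 0 := by rw [hCiℓ]; ring
    have hnonpos : ∀ x ∈ Finset.univ.erase i, M i x * C x ℓ ≤ 0 := by
      intro x hx
      exact mul_nonpos_of_nonpos_of_nonneg
        (hoffdiag i x (Ne.symm (Finset.ne_of_mem_erase hx))) (hCnonneg x ℓ)
    have hrest : (∑ j ∈ Finset.univ.erase i, M i j * C j ℓ) = 0 := by
      rw [← hsplit] at h0
      linarith [h0, hdiag]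
    have hji : j ≠ i := fun h => hj (h ▸ hi)
    have hterm : M i j * C j ℓ = 0 :=
      (Finset.sum_eq_zero_iff_of_nonpos hnonpos).mp hrest j
        (Finset.mem_erase.mpr ⟨hji, Finset.mem_univ j⟩)
    have hCjℓ : 0 < C j ℓ := by
      have hne : C j ℓ ≠ 0 := by simpa [hA] using hj
      exact lt_of_le_of_ne (hCnonneg j ℓ) (Ne.symm hne)
    rcases mul_eq_zero.mp hterm with h | h
    · exact h
    · exact absurd h (ne_of_gt hCjℓ)
  -- counting
  have hsub : A ×ˢ Aᶜ ⊆ Finset.univ.filter (fun p : Fin m × Fin m => M p.1 p.2 = 0) := by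
    intro p hp
    rw [Finset.mem_product] at hp
    simp only [Finset.mem_filter, Finset.mem_univ, true_and]
    exact key p.1 hp.1 p.2 (by simpa using hp.2)
  have hcard := Finset.card_le_card hsub
  rw [Finset.card_product] at hcard
  set a := A.card
  set b := Aᶜ.card
  have hab : a + b = m := by
    have h := Finset.card_add_card_compl A
    rwa [Fintype.card_fin] at h
  have ha1 : 1 ≤ a := Finset.card_pos.mpr ⟨k, hkA⟩
  have hb1 : 1 ≤ b := Finset.card_pos.mpr ⟨ℓ, Finset.mem_compl.mpr hℓA⟩
  have hz : (m : ℤ) ≤ (a : ℤ) * b + 1 := by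
    have h1 : (1 : ℤ) ≤ a := by exact_mod_cast ha1
    have h2 : (1 : ℤ) ≤ b := by exact_mod_cast hb1
    have h3 : (a : ℤ) + b = m := by exact_mod_cast hab
    nlinarith
  have hn : m ≤ a * b + 1 := by exact_mod_cast hz
  omega
end

section
/- Call an m × m real matrix A generic if every square submatrix A[I,J] (obtained by keeping the rows in I and columns in J, with |I| = |J| ≥ 1) has nonzero determinant. If A is generic and invertible, then A^{-1} is generic. -/
/-!
Jacobi's complementary minor identity: if `A * B = 1`, then up to sign
`det A · det B[I, J] = det A[Jᶜ, Iᶜ]`. Since `A` is generic the right-hand side never vanishes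
(for `I = J = univ` it is the empty minor, equal to `1`), so neither does `det B[I, J]`.
-/

/-- A square real matrix is generic if every square submatrix (rows from `I`,
columns from `J`, `|I| = |J| ≥ 1`) has nonzero determinant. -/
def IsGeneric {m : ℕ} (A : Matrix (Fin m) (Fin m) ℝ) : Prop :=
  ∀ (I J : Finset (Fin m)) (h : I.card = J.card), I.Nonempty →
    (A.submatrix (fun i : Fin I.card => ((I.orderIsoOfFin rfl i : I) : Fin m))
      (fun j : Fin I.card => ((J.orderIsoOfFin h.symm j : J) : Fin m))).det ≠ 0

namespace Matrix

variable {R ι n p : Type*} [CommRing R] [Fintype n] [Fintype p] [DecidableEq n] [DecidableEq p]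

/-- Jacobi's identity in block form: right-multiplying `A` by the first block column of
`B = A⁻¹`, completed by `0` and `1`, gives the block upper-triangular `!![1, A₁₂; 0, A₂₂]`. -/
theorem det_mul_det_toBlocks₁₁_of_mul_eq_one {A B : Matrix (n ⊕ p) (n ⊕ p) R} (h : A * B = 1) :
    A.det * B.toBlocks₁₁.det = A.toBlocks₂₂.det := by
  rw [← fromBlocks_toBlocks A, ← fromBlocks_toBlocks B, fromBlocks_multiply, ← fromBlocks_one,
    fromBlocks_inj] at h
  obtain ⟨h₁₁, -, h₂₁, -⟩ := h
  have htriangular : A * fromBlocks B.toBlocks₁₁ 0 B.toBlocks₂₁ 1 =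
      fromBlocks 1 A.toBlocks₁₂ 0 A.toBlocks₂₂ := by
    conv_lhs => rw [← fromBlocks_toBlocks A]
    rw [fromBlocks_multiply]
    simp [h₁₁, h₂₁]
  simpa [det_fromBlocks_zero₁₂, det_fromBlocks_zero₂₁] using congrArg det htriangular

theorem det_submatrix_mul_det_submatrix_inl_of_mul_eq_one [Fintype ι] [DecidableEq ι]
    {A B : Matrix ι ι R} (h : A * B = 1) (e₁ e₂ : n ⊕ p ≃ ι) :
    (A.submatrix e₂ e₁).det * (B.submatrix (e₁ ∘ Sum.inl) (e₂ ∘ Sum.inl)).det =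
      (A.submatrix (e₂ ∘ Sum.inr) (e₁ ∘ Sum.inr)).det := by
  have h' : A.submatrix e₂ e₁ * B.submatrix e₁ e₂ = 1 := by
    rw [submatrix_mul_equiv, h, submatrix_one_equiv]
  exact det_mul_det_toBlocks₁₁_of_mul_eq_one h'

end Matrix

namespace Finset

variable {α : Type*} [Fintype α] [LinearOrder α] {k l : ℕ}

def finSumComplEquiv (s : Finset α) (hs : s.card = k) (hc : sᶜ.card = l) : Fin k ⊕ Fin l ≃ α :=
  (Equiv.sumCongr (s.orderIsoOfFin hs).toEquiv
      ((sᶜ.orderIsoOfFin hc).toEquiv.trans (Equiv.subtypeEquivRight fun _ => mem_compl))).trans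
    (Equiv.sumCompl (· ∈ s))

@[simp]
theorem finSumComplEquiv_comp_inl (s : Finset α) (hs : s.card = k) (hc : sᶜ.card = l) :
    s.finSumComplEquiv hs hc ∘ Sum.inl = s.orderEmbOfFin hs := by
  ext i
  simp [finSumComplEquiv]

@[simp]
theorem finSumComplEquiv_comp_inr (s : Finset α) (hs : s.card = k) (hc : sᶜ.card = l) :
    s.finSumComplEquiv hs hc ∘ Sum.inr = sᶜ.orderEmbOfFin hc := by
  ext i
  simp [finSumComplEquiv]

end Finset

theorem isGeneric_iff_det_submatrix_ne_zero {m : ℕ} {A : Matrix (Fin m) (Fin m) ℝ} :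
    IsGeneric A ↔ ∀ (s t : Finset (Fin m)) (k : ℕ) (hs : s.card = k) (ht : t.card = k),
      (A.submatrix (s.orderEmbOfFin hs) (t.orderEmbOfFin ht)).det ≠ 0 := by
  simp only [IsGeneric, Finset.coe_orderIsoOfFin_apply]
  constructor
  · rintro hA s t k rfl ht
    rcases s.eq_empty_or_nonempty with rfl | hne
    · simp
    · exact hA s t ht.symm hne
  · exact fun hA s t h _ => hA s t s.card rfl h.symm

theorem inverse_of_generic_isGeneric_general {m : ℕ}
    (A B : Matrix (Fin m) (Fin m) ℝ)
    (hAB : A * B = 1)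
    (hA : IsGeneric A) : IsGeneric B := by
  rw [isGeneric_iff_det_submatrix_ne_zero] at hA ⊢
  intro I J k hI hJ
  have hc : Iᶜ.card = Jᶜ.card := by simp [Finset.card_compl, hI, hJ]
  have jacobi := Matrix.det_submatrix_mul_det_submatrix_inl_of_mul_eq_one hAB
    (I.finSumComplEquiv hI hc) (J.finSumComplEquiv hJ rfl)
  simp only [Finset.finSumComplEquiv_comp_inl, Finset.finSumComplEquiv_comp_inr] at jacobi
  exact right_ne_zero_of_mul (jacobi ▸ hA Jᶜ Iᶜ _ rfl hc)

/-- **Lemma 5.6 (i):** the inverse of a generic invertible matrix is generic. -/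
theorem inverse_of_generic_isGeneric {m : ℕ}
    (A B : Matrix (Fin m) (Fin m) ℝ)
    (hAB : A * B = 1) (hBA : B * A = 1)
    (hA : IsGeneric A) : IsGeneric B :=
  inverse_of_generic_isGeneric_general A B hAB hA
end

section
/- Let m ≥ 2 and let A be an m × m real matrix with nonnegative entries that is generic (all square submatrix determinants nonzero). Fix distinct k, ℓ ∈ {1,…,m} and define the skew-symmetric matrix B by b_{ij} = a_{ik}a_{jℓ} − a_{jk}a_{iℓ}. Then any two distinct rows of B have a different number of positive entries. -/
lemma minor_ne {m : ℕ} {A : Matrix (Fin m) (Fin m) ℝ} (hgen : IsGeneric A)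
    {i j k ℓ : Fin m} (hij : i ≠ j) (hkl : k ≠ ℓ) :
    A i k * A j ℓ - A j k * A i ℓ ≠ 0 := by
  intro hE
  have hcard : ({i, j} : Finset (Fin m)).card = ({k, ℓ} : Finset (Fin m)).card := by
    rw [Finset.card_pair hij, Finset.card_pair hkl]
  apply hgen {i, j} {k, ℓ} hcard ⟨i, by simp⟩
  have hc : ({i, j} : Finset (Fin m)).card = 2 := Finset.card_pair hij
  set e : Fin 2 ≃ Fin ({i, j} : Finset (Fin m)).card := finCongr hc.symm with he
  rw [← Matrix.det_submatrix_equiv_self e, Matrix.det_fin_two]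
  simp only [Matrix.submatrix_apply]
  set x0 : Fin m := ((({i, j} : Finset (Fin m)).orderIsoOfFin rfl (e 0) : ({i, j} : Finset (Fin m))) : Fin m) with hx0d
  set x1 : Fin m := ((({i, j} : Finset (Fin m)).orderIsoOfFin rfl (e 1) : ({i, j} : Finset (Fin m))) : Fin m) with hx1d
  set y0 : Fin m := ((({k, ℓ} : Finset (Fin m)).orderIsoOfFin hcard.symm (e 0) : ({k, ℓ} : Finset (Fin m))) : Fin m) with hy0d
  set y1 : Fin m := ((({k, ℓ} : Finset (Fin m)).orderIsoOfFin hcard.symm (e 1) : ({k, ℓ} : Finset (Fin m))) : Fin m) with hy1d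
  have h01 : (0 : Fin 2) ≠ 1 := by decide
  have hxne : x0 ≠ x1 := fun hc' =>
    h01 (e.injective ((({i, j} : Finset (Fin m)).orderIsoOfFin rfl).injective (Subtype.coe_injective hc')))
  have hyne : y0 ≠ y1 := fun hc' =>
    h01 (e.injective ((({k, ℓ} : Finset (Fin m)).orderIsoOfFin hcard.symm).injective (Subtype.coe_injective hc')))
  have hx0 : x0 = i ∨ x0 = j := by
    have := Finset.coe_mem (({i, j} : Finset (Fin m)).orderIsoOfFin rfl (e 0))
    simpa [← hx0d] using this
  have hx1 : x1 = i ∨ x1 = j := by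
    have := Finset.coe_mem (({i, j} : Finset (Fin m)).orderIsoOfFin rfl (e 1))
    simpa [← hx1d] using this
  have hy0 : y0 = k ∨ y0 = ℓ := by
    have := Finset.coe_mem (({k, ℓ} : Finset (Fin m)).orderIsoOfFin hcard.symm (e 0))
    simpa [← hy0d] using this
  have hy1 : y1 = k ∨ y1 = ℓ := by
    have := Finset.coe_mem (({k, ℓ} : Finset (Fin m)).orderIsoOfFin hcard.symm (e 1))
    simpa [← hy1d] using this
  have hx : (x0 = i ∧ x1 = j) ∨ (x0 = j ∧ x1 = i) := by
    rcases hx0 with h|h <;> rcases hx1 with h'|h'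
    · exact absurd (h.trans h'.symm) hxne
    · exact Or.inl ⟨h, h'⟩
    · exact Or.inr ⟨h, h'⟩
    · exact absurd (h.trans h'.symm) hxne
  have hy : (y0 = k ∧ y1 = ℓ) ∨ (y0 = ℓ ∧ y1 = k) := by
    rcases hy0 with h|h <;> rcases hy1 with h'|h'
    · exact absurd (h.trans h'.symm) hyne
    · exact Or.inl ⟨h, h'⟩
    · exact Or.inr ⟨h, h'⟩
    · exact absurd (h.trans h'.symm) hyne
  rcases hx with ⟨h1, h2⟩|⟨h1, h2⟩ <;> rcases hy with ⟨h3, h4⟩|⟨h3, h4⟩ <;>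
    rw [h1, h2, h3, h4] <;> linarith

lemma entry_pos' {m : ℕ} {A : Matrix (Fin m) (Fin m) ℝ}
    (hnonneg : ∀ i j, 0 ≤ A i j) (hgen : IsGeneric A) (i j : Fin m) :
    0 < A i j := by
  rcases (hnonneg i j).lt_or_eq with h | h
  · exact h
  exfalso
  have hcard : ({i} : Finset (Fin m)).card = ({j} : Finset (Fin m)).card := by simp
  apply hgen {i} {j} hcard (Finset.singleton_nonempty i)
  have hc : ({i} : Finset (Fin m)).card = 1 := Finset.card_singleton i
  rw [← Matrix.det_submatrix_equiv_self (finCongr hc.symm)]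
  rw [Matrix.det_fin_one]
  have hx : ((({i} : Finset (Fin m)).orderIsoOfFin rfl (finCongr hc.symm 0) : ({i} : Finset (Fin m))) : Fin m) = i :=
    Finset.mem_singleton.mp (Finset.coe_mem _)
  have hy : (((({j} : Finset (Fin m))).orderIsoOfFin hcard.symm (finCongr hc.symm 0) : ({j} : Finset (Fin m))) : Fin m) = j :=
    Finset.mem_singleton.mp (Finset.coe_mem _)
  simp only [Matrix.submatrix_apply]
  rw [hx, hy, ← h]

/-- **Sign-pattern lemma (Lemma 5.7):** for a nonnegative generic matrix `A`
and distinct columns `k ≠ ℓ`, the skew-symmetric matrix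
`b_{ij} = a_{ik} a_{jℓ} − a_{jk} a_{iℓ}` has the property that any two
distinct rows have a different number of positive entries. -/
theorem sign_pattern_distinct_rows {m : ℕ} (hm : 2 ≤ m)
    (A : Matrix (Fin m) (Fin m) ℝ)
    (hnonneg : ∀ i j, 0 ≤ A i j)
    (hgen : IsGeneric A)
    (k ℓ : Fin m) (hkl : k ≠ ℓ)
    (B : Matrix (Fin m) (Fin m) ℝ)
    (hB : ∀ i j, B i j = A i k * A j ℓ - A j k * A i ℓ) :
    ∀ i j : Fin m, i ≠ j →
      (Finset.univ.filter fun r => 0 < B i r).card ≠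
        (Finset.univ.filter fun r => 0 < B j r).card := by
  have hApos : ∀ i j, 0 < A i j := entry_pos' hnonneg hgen
  set r : Fin m → ℝ := fun p => A p ℓ / A p k with hr
  have hBr : ∀ p q : Fin m, (0 < B p q ↔ r p < r q) := by
    intro p q
    rw [hB, sub_pos, hr, div_lt_div_iff₀ (hApos p k) (hApos q k)]
    constructor <;> intro h <;> nlinarith
  have aux : ∀ p q : Fin m, r p < r q →
      (Finset.univ.filter fun t => 0 < B q t).card <
        (Finset.univ.filter fun t => 0 < B p t).card := by
    intro p q hpq
    apply Finset.card_lt_card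
    constructor
    · intro t ht
      simp only [Finset.mem_filter, Finset.mem_univ, true_and] at *
      rw [hBr] at ht ⊢
      exact lt_trans hpq ht
    · intro hsub
      have hq : q ∈ Finset.univ.filter fun t => 0 < B p t := by
        simp only [Finset.mem_filter, Finset.mem_univ, true_and]
        exact (hBr p q).mpr hpq
      have := hsub hq
      simp only [Finset.mem_filter, Finset.mem_univ, true_and] at this
      exact absurd ((hBr q q).mp this) (lt_irrefl _)
  intro i j hij
  have hne : r i ≠ r j := by
    intro heq
    apply minor_ne hgen hij hkl
    rw [hr] at heq
    have h1 := hApos i k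
    have h2 := hApos j k
    field_simp at heq
    nlinarith
  rcases hne.lt_or_gt with h | h
  · exact (aux i j h).ne'
  · exact (aux j i h).ne
end

section
/- Let m ≥ 2 and let M be a symmetric invertible m × m real matrix with nonpositive off-diagonal entries that is an M-matrix, and set C = M^{-1}. Then for all distinct k, ℓ ∈ {1,…,m}: (1/2) Σ_{i=1}^m Σ_{j=1}^m |m_{ij}| · |c_{ik}c_{jℓ} − c_{jk}c_{iℓ}| ≤ (m−1) c_{kℓ}. -/
open Finset

/-- Cut lemma: for any set `S`, the net "flow" across the cut equals
`g k ⋅ [k∈S] - f ℓ ⋅ [ℓ∈S] ≤ g k`. -/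
private lemma mmatrix_cut_bound {m : ℕ} (M : Matrix (Fin m) (Fin m) ℝ)
    (hsymm : ∀ i j, M i j = M j i)
    (f g : Fin m → ℝ) (k ℓ : Fin m)
    (hf : ∀ i, ∑ j, M i j * f j = if i = k then 1 else 0)
    (hg : ∀ i, ∑ j, M i j * g j = if i = ℓ then 1 else 0)
    (hfl : 0 ≤ f ℓ) (hgk : 0 ≤ g k)
    (S : Finset (Fin m)) :
    ∑ i ∈ S, ∑ j ∈ Sᶜ, (-M i j) * (f i * g j - f j * g i) ≤ g k := by
  have hsplit : ∀ (h : Fin m → ℝ) (i : Fin m), ∑ j ∈ Sᶜ, M i j * h j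
      = (∑ j, M i j * h j) - ∑ j ∈ S, M i j * h j := by
    intro h i
    rw [eq_sub_iff_add_eq, add_comm, Finset.sum_add_sum_compl]
  have step1 : ∀ i, ∑ j ∈ Sᶜ, (-M i j) * (f i * g j - f j * g i)
      = g i * (∑ j ∈ Sᶜ, M i j * f j) - f i * (∑ j ∈ Sᶜ, M i j * g j) := by
    intro i
    rw [Finset.mul_sum, Finset.mul_sum, ← Finset.sum_sub_distrib]
    exact Finset.sum_congr rfl fun j _ => by ring
  calc ∑ i ∈ S, ∑ j ∈ Sᶜ, (-M i j) * (f i * g j - f j * g i)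
      = ∑ i ∈ S, (((if i = k then g i else 0) - (if i = ℓ then f i else 0))
          + (f i * ∑ j ∈ S, M i j * g j - g i * ∑ j ∈ S, M i j * f j)) := by
        refine Finset.sum_congr rfl fun i _ => ?_
        rw [step1, hsplit f, hsplit g, hf, hg]
        split_ifs <;> ring
    _ = (∑ i ∈ S, ((if i = k then g i else 0) - (if i = ℓ then f i else 0)))
          + ((∑ i ∈ S, ∑ j ∈ S, f i * (M i j * g j))
            - ∑ i ∈ S, ∑ j ∈ S, g i * (M i j * f j)) := by
        rw [Finset.sum_add_distrib]
        congr 1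
        rw [← Finset.sum_sub_distrib]
        refine Finset.sum_congr rfl fun i _ => ?_
        rw [Finset.mul_sum, Finset.mul_sum]
    _ = ∑ i ∈ S, ((if i = k then g i else 0) - (if i = ℓ then f i else 0)) := by
        have hz : ∑ i ∈ S, ∑ j ∈ S, g i * (M i j * f j)
            = ∑ i ∈ S, ∑ j ∈ S, f i * (M i j * g j) := by
          rw [Finset.sum_comm]
          refine Finset.sum_congr rfl fun i _ => Finset.sum_congr rfl fun j _ => ?_
          rw [hsymm j i]; ring
        rw [hz]; ring
    _ ≤ g k := by
        rw [Finset.sum_sub_distrib, Finset.sum_ite_eq' S k g, Finset.sum_ite_eq' S ℓ f]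
        split_ifs <;> linarith

/-- **Theorem 5.1:** for a symmetric invertible M-matrix `M` with inverse `C`
and distinct indices `k ≠ ℓ`,
`(1/2) ∑ᵢ ∑ⱼ |m_{ij}| |c_{ik} c_{jℓ} − c_{jk} c_{iℓ}| ≤ (m−1) c_{kℓ}`. -/
theorem mmatrix_minor_inequality {m : ℕ} (hm : 2 ≤ m)
    (M C : Matrix (Fin m) (Fin m) ℝ)
    (hsymm : M.IsSymm)
    (hMC : M * C = 1) (hCM : C * M = 1)
    (hoffdiag : ∀ i j, i ≠ j → M i j ≤ 0)
    (hCnonneg : ∀ i j, 0 ≤ C i j)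
    (k ℓ : Fin m) (hkl : k ≠ ℓ) :
    (1 / 2) * ∑ i, ∑ j, |M i j| * |C i k * C j ℓ - C j k * C i ℓ|
      ≤ (m - 1 : ℝ) * C k ℓ := by
  set f : Fin m → ℝ := fun i => C i k with hf_def
  set g : Fin m → ℝ := fun i => C i ℓ with hg_def
  set D : Fin m → Fin m → ℝ := fun i j => f i * g j - f j * g i with hD_def
  have hsymm' : ∀ i j, M i j = M j i := fun i j => hsymm.apply j i
  have hfnn : ∀ i, 0 ≤ f i := fun i => hCnonneg i k
  have hgnn : ∀ i, 0 ≤ g i := fun i => hCnonneg i ℓ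
  have hMf : ∀ i, ∑ j, M i j * f j = if i = k then 1 else 0 := by
    intro i
    have h := congrFun (congrFun hMC i) k
    simpa [Matrix.mul_apply, Matrix.one_apply] using h
  have hMg : ∀ i, ∑ j, M i j * g j = if i = ℓ then 1 else 0 := by
    intro i
    have h := congrFun (congrFun hMC i) ℓ
    simpa [Matrix.mul_apply, Matrix.one_apply] using h
  -- sorting permutation by ratio f/g (descending), vertices with g = 0 first
  set key : Fin m → ℝ := fun i => if g i = 0 then (-1) else -(f i / (f i + g i)) with hkey_def
  set σ : Equiv.Perm (Fin m) := Tuple.sort key with hσ_def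
  have hmono : Monotone (key ∘ σ) := Tuple.monotone_sort key
  have hDkey : ∀ i j, key i ≤ key j → 0 ≤ D i j := by
    intro i j hkij
    by_cases hgi : g i = 0
    · have : D i j = f i * g j := by simp [hD_def, hgi]
      rw [this]; exact mul_nonneg (hfnn i) (hgnn j)
    · have hgi' : 0 < g i := lt_of_le_of_ne (hgnn i) (Ne.symm hgi)
      have hdi : 0 < f i + g i := by have := hfnn i; linarith
      have hkeyi : key i = -(f i / (f i + g i)) := by simp [hkey_def, hgi]
      have hlt : -1 < key i := by
        rw [hkeyi]
        have : f i / (f i + g i) < 1 := (div_lt_one hdi).mpr (by linarith [hfnn i])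
        linarith
      by_cases hgj : g j = 0
      · exfalso
        have hkeyj : key j = -1 := by simp [hkey_def, hgj]
        rw [hkeyj] at hkij; linarith
      · have hgj' : 0 < g j := lt_of_le_of_ne (hgnn j) (Ne.symm hgj)
        have hdj : 0 < f j + g j := by have := hfnn j; linarith
        have hkeyj : key j = -(f j / (f j + g j)) := by simp [hkey_def, hgj]
        have hdiv : f j / (f j + g j) ≤ f i / (f i + g i) := by
          rw [hkeyi, hkeyj] at hkij; linarith
        rw [div_le_div_iff₀ hdj hdi] at hdiv
        have : f j * g i ≤ f i * g j := by nlinarith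
        simp only [hD_def]; linarith
  have hD' : ∀ a b : Fin m, a ≤ b → 0 ≤ D (σ a) (σ b) :=
    fun a b hab => hDkey _ _ (hmono hab)
  have hDanti : ∀ i j, D j i = -(D i j) := by intro i j; simp only [hD_def]; ring
  -- Step 0 : (1/2) ∑∑ |M| |D| = ∑∑ |M| max(D,0)
  have hswap : ∑ i, ∑ j, |M i j| * max (D j i) 0 = ∑ i, ∑ j, |M i j| * max (D i j) 0 := by
    rw [Finset.sum_comm]
    exact Finset.sum_congr rfl fun i _ => Finset.sum_congr rfl fun j _ => by
      rw [hsymm' j i]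
  have step0 : (1 / 2 : ℝ) * ∑ i, ∑ j, |M i j| * |D i j|
      = ∑ i, ∑ j, |M i j| * max (D i j) 0 := by
    have hexp : ∀ i j : Fin m, |M i j| * |D i j|
        = |M i j| * max (D i j) 0 + |M i j| * max (D j i) 0 := by
      intro i j
      have h1 : |D i j| = max (D i j) 0 + max (D j i) 0 := by
        rw [hDanti i j]
        rcases le_total 0 (D i j) with h | h
        · rw [abs_of_nonneg h, max_eq_left h, max_eq_right (by linarith)]; ring
        · rw [abs_of_nonpos h, max_eq_right h, max_eq_left (by linarith)]; ring
      rw [h1]; ring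
    have h2 : ∑ i, ∑ j, |M i j| * |D i j|
        = 2 * ∑ i, ∑ j, |M i j| * max (D i j) 0 := by
      calc ∑ i, ∑ j, |M i j| * |D i j|
          = ∑ i, ∑ j, (|M i j| * max (D i j) 0 + |M i j| * max (D j i) 0) :=
            Finset.sum_congr rfl fun i _ => Finset.sum_congr rfl fun j _ => hexp i j
        _ = (∑ i, ∑ j, |M i j| * max (D i j) 0)
            + ∑ i, ∑ j, |M i j| * max (D j i) 0 := by
            rw [← Finset.sum_add_distrib]
            exact Finset.sum_congr rfl fun i _ => Finset.sum_add_distrib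
        _ = 2 * ∑ i, ∑ j, |M i j| * max (D i j) 0 := by rw [hswap]; ring
    rw [h2]; ring
  -- Step B : reindex by σ
  have hreindex : ∑ i, ∑ j, |M i j| * max (D i j) 0
      = ∑ a, ∑ b, |M (σ a) (σ b)| * max (D (σ a) (σ b)) 0 := by
    rw [← Equiv.sum_comp σ (fun i => ∑ j, |M i j| * max (D i j) 0)]
    exact Finset.sum_congr rfl fun a _ =>
      (Equiv.sum_comp σ (fun j => |M (σ a) j| * max (D (σ a) j) 0)).symm
  -- the pieces V s a b
  set V : ℕ → Fin m → Fin m → ℝ := fun s a b =>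
    if (a : ℕ) ≤ s ∧ s < (b : ℕ) then (-M (σ a) (σ b)) * D (σ a) (σ b) else 0 with hV_def
  have hVnn : ∀ s a b, 0 ≤ V s a b := by
    intro s a b
    simp only [hV_def]
    split_ifs with h
    · obtain ⟨h1, h2⟩ := h
      have hab : a < b := by
        have : (a : ℕ) < (b : ℕ) := lt_of_le_of_lt h1 h2
        exact Fin.lt_def.mpr this
      have hne : σ a ≠ σ b := fun hc => absurd (σ.injective hc) (ne_of_lt hab)
      exact mul_nonneg (by linarith [hoffdiag _ _ hne]) (hD' a b hab.le)
    · exact le_refl 0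
  -- per-pair bound
  have hpair : ∀ a b : Fin m, |M (σ a) (σ b)| * max (D (σ a) (σ b)) 0
      ≤ ∑ s ∈ Finset.range (m - 1), V s a b := by
    intro a b
    rcases lt_trichotomy a b with hab | hab | hab
    · have h1 : σ a ≠ σ b := fun h => absurd (σ.injective h) (ne_of_lt hab)
      have hDab := hD' a b hab.le
      have hM := hoffdiag _ _ h1
      have hmem : (a : ℕ) ∈ Finset.range (m - 1) := by
        rw [Finset.mem_range]
        have hb : (b : ℕ) < m := b.isLt
        have : (a : ℕ) < (b : ℕ) := Fin.lt_def.mp hab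
        omega
      have heq : |M (σ a) (σ b)| * max (D (σ a) (σ b)) 0 = V (a : ℕ) a b := by
        simp only [hV_def]
        rw [if_pos ⟨le_refl _, Fin.lt_def.mp hab⟩, abs_of_nonpos hM, max_eq_left hDab]
      rw [heq]
      exact Finset.single_le_sum (fun s _ => hVnn s a b) hmem
    · subst hab
      have h0 : D (σ a) (σ a) = 0 := by simp only [hD_def]; ring
      rw [h0, max_self, mul_zero]
      exact Finset.sum_nonneg fun s _ => hVnn s a a
    · have h0 : max (D (σ a) (σ b)) 0 = 0 := by
        have h1 := hD' b a hab.le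
        have h2 : D (σ a) (σ b) = -(D (σ b) (σ a)) := hDanti (σ b) (σ a)
        exact max_eq_right (by linarith)
      rw [h0, mul_zero]
      exact Finset.sum_nonneg fun s _ => hVnn s a b
  -- cut bound for each level s
  have hcut : ∀ s : ℕ, ∑ a, ∑ b, V s a b ≤ C k ℓ := by
    intro s
    set A : Finset (Fin m) := univ.filter (fun a : Fin m => (a : ℕ) ≤ s) with hA
    set B : Finset (Fin m) := univ.filter (fun b : Fin m => s < (b : ℕ)) with hB
    have h1 : ∑ a ∈ A, ∑ b ∈ B, (-M (σ a) (σ b)) * D (σ a) (σ b)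
        = ∑ a, ∑ b, V s a b := by
      rw [hA, Finset.sum_filter]
      refine Finset.sum_congr rfl fun a _ => ?_
      by_cases h : (a : ℕ) ≤ s
      · rw [if_pos h, hB, Finset.sum_filter]
        exact Finset.sum_congr rfl fun b _ => by simp [hV_def, h]
      · rw [if_neg h]
        exact (Finset.sum_eq_zero fun b _ => by simp [hV_def, h]).symm
    have hBc : (A.map σ.toEmbedding)ᶜ = B.map σ.toEmbedding := by
      ext j
      simp [hA, hB, Finset.mem_map_equiv, not_le]
    have h2 : ∑ i ∈ A.map σ.toEmbedding, ∑ j ∈ (A.map σ.toEmbedding)ᶜ,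
        (-M i j) * (f i * g j - f j * g i)
        = ∑ a ∈ A, ∑ b ∈ B, (-M (σ a) (σ b)) * D (σ a) (σ b) := by
      rw [hBc, Finset.sum_map]
      refine Finset.sum_congr rfl fun a _ => ?_
      rw [Finset.sum_map]
      rfl
    have h3 := mmatrix_cut_bound M hsymm' f g k ℓ hMf hMg
      (hCnonneg ℓ k) (hCnonneg k ℓ) (A.map σ.toEmbedding)
    rw [h2, h1] at h3
    exact h3
  -- assemble
  calc (1 / 2 : ℝ) * ∑ i, ∑ j, |M i j| * |C i k * C j ℓ - C j k * C i ℓ|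
      = (1 / 2 : ℝ) * ∑ i, ∑ j, |M i j| * |D i j| := rfl
    _ = ∑ i, ∑ j, |M i j| * max (D i j) 0 := step0
    _ = ∑ a, ∑ b, |M (σ a) (σ b)| * max (D (σ a) (σ b)) 0 := hreindex
    _ ≤ ∑ a, ∑ b, ∑ s ∈ Finset.range (m - 1), V s a b :=
        Finset.sum_le_sum fun a _ => Finset.sum_le_sum fun b _ => hpair a b
    _ = ∑ s ∈ Finset.range (m - 1), ∑ a, ∑ b, V s a b := by
        rw [show (∑ a, ∑ b, ∑ s ∈ Finset.range (m - 1), V s a b)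
            = ∑ a, ∑ s ∈ Finset.range (m - 1), ∑ b, V s a b from
          Finset.sum_congr rfl fun a _ => Finset.sum_comm, Finset.sum_comm]
    _ ≤ ∑ _s ∈ Finset.range (m - 1), C k ℓ :=
        Finset.sum_le_sum fun s _ => hcut s
    _ = (m - 1 : ℝ) * C k ℓ := by
        rw [Finset.sum_const, Finset.card_range, nsmul_eq_mul]
        congr 1
        push_cast [Nat.cast_sub (by omega : 1 ≤ m)]
        ring
end

section
/- Let m ≥ 2 and let M be the m × m tridiagonal matrix with 3 on the diagonal and −1 on the super- and sub-diagonals, and C = M^{-1}. Then (1/2) Σ_{i,j} |m_{ij}(c_{i1}c_{jm} − c_{j1}c_{im})| = (m−1) c_{1m}; in particular the inequality (1/2)Σ|m_{ij}||c_{ik}c_{jℓ} − c_{jk}c_{iℓ}| ≤ (m−1)c_{kℓ} is sharp. -/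
open Finset

/-- **Sharpness example (Example 5.2):** for the tridiagonal matrix `M` with
`3` on the diagonal and `−1` on the sub/super-diagonals, with inverse `C`,
`(1/2) ∑ᵢ ∑ⱼ |m_{ij} (c_{i1} c_{jm} − c_{j1} c_{im})| = (m−1) c_{1m}`;
in particular the inequality of Theorem 5.1 is sharp. -/
theorem tridiagonal_sharpness {m : ℕ} (hm : 2 ≤ m)
    (M C : Matrix (Fin m) (Fin m) ℝ)
    (hM : ∀ i j : Fin m, M i j = if i = j then (3 : ℝ)
      else if (i : ℕ) + 1 = (j : ℕ) ∨ (j : ℕ) + 1 = (i : ℕ) then -1 else 0)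
    (hMC : M * C = 1) (hCM : C * M = 1) :
    (1 / 2) * ∑ i, ∑ j,
        |M i j * (C i ⟨0, by omega⟩ * C j ⟨m - 1, by omega⟩
          - C j ⟨0, by omega⟩ * C i ⟨m - 1, by omega⟩)|
      = (m - 1 : ℝ) * C ⟨0, by omega⟩ ⟨m - 1, by omega⟩ := by
  have h0 : 0 < m := by omega
  have hm1 : m - 1 < m := by omega
  set A : ℕ → ℝ := fun i => if h : i < m then C ⟨i, h⟩ ⟨0, h0⟩ else 0 with hA
  set B : ℕ → ℝ := fun i => if h : i < m then C ⟨i, h⟩ ⟨m - 1, hm1⟩ else 0 with hB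
  have hA' : ∀ k (hk : k < m), A k = C ⟨k, hk⟩ ⟨0, h0⟩ := fun k hk => dif_pos hk
  have hB' : ∀ k (hk : k < m), B k = C ⟨k, hk⟩ ⟨m - 1, hm1⟩ := fun k hk => dif_pos hk
  have hA0 : ∀ k, m ≤ k → A k = 0 := fun k hk => dif_neg (by omega)
  have hB0 : ∀ k, m ≤ k → B k = 0 := fun k hk => dif_neg (by omega)
  -- the key three-term relation from M * C = 1
  have key : ∀ (jj : ℕ) (hj : jj < m) (g : ℕ → ℝ),
      (∀ k (hk : k < m), g k = C ⟨k, hk⟩ ⟨jj, hj⟩) → (∀ k, m ≤ k → g k = 0) →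
      ∀ i, i < m →
        3 * g i - g (i + 1) - (if i = 0 then 0 else g (i - 1))
          = (if i = jj then 1 else 0) := by
    intro jj hj g hg hg0 i hi
    have h1 := congrFun (congrFun hMC ⟨i, hi⟩) ⟨jj, hj⟩
    rw [Matrix.mul_apply, Matrix.one_apply] at h1
    have h2 : ∑ k : Fin m, M ⟨i, hi⟩ k * C k ⟨jj, hj⟩
        = ∑ k ∈ Finset.range m,
            ((if i = k then (3 : ℝ) else if i + 1 = k ∨ k + 1 = i then -1 else 0) * g k) := by
      rw [← Fin.sum_univ_eq_sum_range
        (fun k => (if i = k then (3 : ℝ) else if i + 1 = k ∨ k + 1 = i then -1 else 0) * g k) m]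
      refine Finset.sum_congr rfl (fun k _ => ?_)
      rw [hM]
      refine congrArg₂ (· * ·) ?_ ?_
      · simp [Fin.ext_iff]
      · exact (hg (k : ℕ) k.isLt).symm
    rw [h2] at h1
    have h3 : ∀ k, ((if i = k then (3 : ℝ) else if i + 1 = k ∨ k + 1 = i then -1 else 0) * g k)
        = (if k = i then 3 * g k else 0) + (if k = i + 1 then -g k else 0)
          + (if k + 1 = i then -g k else 0) := by
      intro k
      by_cases e1 : i = k
      · rw [if_pos e1, if_pos e1.symm,
          if_neg (show ¬k = i + 1 by omega), if_neg (show ¬k + 1 = i by omega)]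
        ring
      · rw [if_neg e1, if_neg (show ¬k = i from fun h => e1 h.symm)]
        by_cases e2 : k = i + 1
        · rw [if_pos (Or.inl e2.symm), if_pos e2, if_neg (show ¬k + 1 = i by omega)]
          ring
        · by_cases e3 : k + 1 = i
          · rw [if_pos (Or.inr e3), if_neg e2, if_pos e3]
            ring
          · rw [if_neg (show ¬(i + 1 = k ∨ k + 1 = i) by omega), if_neg e2, if_neg e3]
            ring
    rw [Finset.sum_congr rfl (fun k _ => h3 k)] at h1
    rw [Finset.sum_add_distrib, Finset.sum_add_distrib,
      Finset.sum_ite_eq' (Finset.range m) i (fun k => 3 * g k),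
      Finset.sum_ite_eq' (Finset.range m) (i + 1) (fun k => -g k)] at h1
    rw [if_pos (Finset.mem_range.mpr hi)] at h1
    have h4 : (if i + 1 ∈ Finset.range m then -g (i + 1) else 0) = -g (i + 1) := by
      by_cases hc : i + 1 ∈ Finset.range m
      · rw [if_pos hc]
      · rw [if_neg hc, hg0 (i + 1) (by simpa using hc)]
        ring
    rw [h4] at h1
    have h5 : (∑ k ∈ Finset.range m, if k + 1 = i then -g k else 0)
        = (if i = 0 then 0 else -g (i - 1)) := by
      by_cases hi0 : i = 0
      · subst hi0
        simp
      · obtain ⟨t, rfl⟩ : ∃ t, i = t + 1 := ⟨i - 1, by omega⟩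
        rw [if_neg hi0, show t + 1 - 1 = t by omega]
        have hcong : ∀ k ∈ Finset.range m, (if k + 1 = t + 1 then -g k else 0)
            = (if k = t then -g k else 0) := by
          intro k _
          by_cases hk : k = t
          · rw [if_pos (show k + 1 = t + 1 by omega), if_pos hk]
          · rw [if_neg (show ¬k + 1 = t + 1 by omega), if_neg hk]
        rw [Finset.sum_congr rfl hcong,
          Finset.sum_ite_eq' (Finset.range m) t (fun k => -g k),
          if_pos (Finset.mem_range.mpr (show t < m by omega))]
    rw [h5] at h1
    have h6 : ((⟨i, hi⟩ : Fin m) = ⟨jj, hj⟩) ↔ i = jj := by simp [Fin.ext_iff]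
    have h7 : (if i = 0 then (0 : ℝ) else -g (i - 1))
        = -(if i = 0 then (0 : ℝ) else g (i - 1)) := by
      split_ifs <;> ring
    rw [h7] at h1
    simp only [h6] at h1
    linarith [h1]
  have keyA := key 0 h0 A hA' hA0
  have keyB := key (m - 1) hm1 B hB' hB0
  -- boundary and recurrences
  have a0 : 3 * A 0 - A 1 = 1 := by
    have := keyA 0 h0
    simpa using this
  have b0 : 3 * B 0 - B 1 = 0 := by
    have := keyB 0 h0
    rw [if_pos rfl, if_neg (show ¬(0 : ℕ) = m - 1 by omega)] at this
    simpa using this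
  have arec : ∀ i, i + 1 < m → A (i + 2) = 3 * A (i + 1) - A i := by
    intro i hi
    have hne : ¬(i + 1 = 0) := by omega
    have := keyA (i + 1) hi
    rw [if_neg hne, if_neg hne, show i + 1 - 1 = i by omega,
      show i + 1 + 1 = i + 2 by omega] at this
    linarith
  have brec : ∀ i, i + 2 < m → B (i + 2) = 3 * B (i + 1) - B i := by
    intro i hi
    have hne : ¬(i + 1 = 0) := by omega
    have hne2 : ¬(i + 1 = m - 1) := by omega
    have := keyB (i + 1) (by omega)
    rw [if_neg hne, if_neg hne2, show i + 1 - 1 = i by omega,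
      show i + 1 + 1 = i + 2 by omega] at this
    linarith
  have blast : 3 * B (m - 1) - B (m - 2) = 1 := by
    have hne : ¬(m - 1 = 0) := by omega
    have := keyB (m - 1) hm1
    rw [if_neg hne, if_pos rfl, hB0 (m - 1 + 1) (by omega),
      show m - 1 - 1 = m - 2 by omega] at this
    linarith
  -- the Wronskian is constant
  have hW : ∀ i, i + 1 < m → A i * B (i + 1) - A (i + 1) * B i = B 0 := by
    intro i
    induction i with
    | zero =>
      intro _
      show A 0 * B 1 - A 1 * B 0 = B 0
      linear_combination B 0 * a0 - A 0 * b0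
    | succ i ih =>
      intro h
      show A (i + 1) * B (i + 2) - A (i + 2) * B (i + 1) = B 0
      have ha := arec i (by omega)
      have hb := brec i h
      have hw := ih (by omega)
      linear_combination hw + A (i + 1) * hb - B (i + 1) * ha
  -- positivity of B 0
  have hB0pos : 0 ≤ B 0 := by
    by_contra hneg
    push_neg at hneg
    have mono : ∀ i, i + 1 < m → B (i + 1) ≤ B i ∧ B (i + 1) ≤ 0 := by
      intro i
      induction i with
      | zero =>
        intro _
        constructor
        · show B 1 ≤ B 0; linarith
        · show B 1 ≤ 0; linarith
      | succ i ih =>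
        intro h
        obtain ⟨h1, h2⟩ := ih (by omega)
        have hb := brec i h
        constructor
        · show B (i + 2) ≤ B (i + 1); linarith
        · show B (i + 2) ≤ 0; linarith
    obtain ⟨h1, h2⟩ := mono (m - 2) (by omega)
    rw [show m - 2 + 1 = m - 1 by omega] at h1 h2
    linarith
  -- evaluate the double sum
  have main : ∑ i : Fin m, ∑ j : Fin m,
      |M i j * (C i ⟨0, h0⟩ * C j ⟨m - 1, hm1⟩
          - C j ⟨0, h0⟩ * C i ⟨m - 1, hm1⟩)|
      = ∑ i ∈ Finset.range m, ∑ j ∈ Finset.range m,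
          |(if i = j then (3 : ℝ) else if i + 1 = j ∨ j + 1 = i then -1 else 0)
            * (A i * B j - A j * B i)| := by
    rw [← Fin.sum_univ_eq_sum_range (fun i => ∑ j ∈ Finset.range m,
      |(if i = j then (3 : ℝ) else if i + 1 = j ∨ j + 1 = i then -1 else 0)
            * (A i * B j - A j * B i)|) m]
    refine Finset.sum_congr rfl (fun i _ => ?_)
    rw [← Fin.sum_univ_eq_sum_range (fun j =>
      |(if (i : ℕ) = j then (3 : ℝ) else if (i : ℕ) + 1 = j ∨ j + 1 = (i : ℕ) then -1 else 0)
            * (A i * B j - A j * B i)|) m]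
    refine Finset.sum_congr rfl (fun j _ => ?_)
    have e2 : C i ⟨0, h0⟩ * C j ⟨m - 1, hm1⟩ - C j ⟨0, h0⟩ * C i ⟨m - 1, hm1⟩
        = A (i : ℕ) * B (j : ℕ) - A (j : ℕ) * B (i : ℕ) := by
      rw [hA' (i : ℕ) i.isLt, hA' (j : ℕ) j.isLt, hB' (i : ℕ) i.isLt, hB' (j : ℕ) j.isLt]
    have e3 : (if i = j then (3 : ℝ)
          else if (i : ℕ) + 1 = (j : ℕ) ∨ (j : ℕ) + 1 = (i : ℕ) then -1 else 0)
        = (if (i : ℕ) = (j : ℕ) then (3 : ℝ)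
          else if (i : ℕ) + 1 = (j : ℕ) ∨ (j : ℕ) + 1 = (i : ℕ) then -1 else 0) := by
      simp [Fin.ext_iff]
    rw [hM, e2, e3]
  rw [main]
  have tsplit : ∀ i ∈ Finset.range m, ∀ j ∈ Finset.range m,
      |(if i = j then (3 : ℝ) else if i + 1 = j ∨ j + 1 = i then -1 else 0)
        * (A i * B j - A j * B i)|
      = (if j = i + 1 then B 0 else 0) + (if j + 1 = i then B 0 else 0) := by
    intro i hi j hj
    rw [Finset.mem_range] at hi hj
    by_cases e1 : i = j
    · subst e1
      rw [if_pos rfl, if_neg (show ¬i = i + 1 by omega), if_neg (show ¬i + 1 = i by omega),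
        show A i * B i - A i * B i = 0 by ring]
      simp
    · rw [if_neg e1]
      by_cases e2 : j = i + 1
      · subst e2
        rw [if_pos (Or.inl rfl), if_pos rfl, if_neg (show ¬i + 1 + 1 = i by omega),
          hW i hj, abs_mul, abs_neg, abs_one, one_mul, abs_of_nonneg hB0pos]
        ring
      · by_cases e3 : j + 1 = i
        · have e4 : i = j + 1 := e3.symm
          subst e4
          rw [if_pos (Or.inr rfl), if_neg e2, if_pos rfl,
            abs_mul, abs_neg, abs_one, one_mul, abs_sub_comm, hW j hi,
            abs_of_nonneg hB0pos]
          ring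
        · rw [if_neg (show ¬(i + 1 = j ∨ j + 1 = i) by omega), if_neg e2, if_neg e3]
          simp
  rw [Finset.sum_congr rfl (fun i hi => Finset.sum_congr rfl (fun j hj => tsplit i hi j hj))]
  have inner : ∀ i ∈ Finset.range m,
      (∑ j ∈ Finset.range m, ((if j = i + 1 then B 0 else 0) + (if j + 1 = i then B 0 else 0)))
      = (if i + 1 < m then B 0 else 0) + (if 1 ≤ i then B 0 else 0) := by
    intro i hi
    rw [Finset.mem_range] at hi
    rw [Finset.sum_add_distrib,
      Finset.sum_ite_eq' (Finset.range m) (i + 1) (fun _ => B 0)]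
    congr 1
    · simp [Finset.mem_range]
    · by_cases hi0 : i = 0
      · subst hi0
        simp
      · obtain ⟨t, rfl⟩ : ∃ t, i = t + 1 := ⟨i - 1, by omega⟩
        have hcong : ∀ j ∈ Finset.range m, (if j + 1 = t + 1 then B 0 else 0)
            = (if j = t then B 0 else 0) := by
          intro j _
          by_cases hk : j = t
          · rw [if_pos (show j + 1 = t + 1 by omega), if_pos hk]
          · rw [if_neg (show ¬j + 1 = t + 1 by omega), if_neg hk]
        rw [Finset.sum_congr rfl hcong,
          Finset.sum_ite_eq' (Finset.range m) t (fun _ => B 0),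
          if_pos (Finset.mem_range.mpr (show t < m by omega)),
          if_pos (show 1 ≤ t + 1 by omega)]
  rw [Finset.sum_congr rfl inner, Finset.sum_add_distrib]
  have s1 : (∑ i ∈ Finset.range m, if i + 1 < m then B 0 else 0) = (m - 1 : ℝ) * B 0 := by
    have hcong : ∀ i ∈ Finset.range m, (if i + 1 < m then B 0 else 0)
        = B 0 - (if i = m - 1 then B 0 else 0) := by
      intro i hi
      rw [Finset.mem_range] at hi
      by_cases h : i = m - 1
      · rw [if_pos h, if_neg (show ¬i + 1 < m by omega)]; ring
      · rw [if_neg h, if_pos (show i + 1 < m by omega)]; ring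
    rw [Finset.sum_congr rfl hcong, Finset.sum_sub_distrib, Finset.sum_const,
      Finset.sum_ite_eq' (Finset.range m) (m - 1) (fun _ => B 0),
      if_pos (Finset.mem_range.mpr hm1), Finset.card_range, nsmul_eq_mul]
    ring
  have s2 : (∑ i ∈ Finset.range m, if 1 ≤ i then B 0 else 0) = (m - 1 : ℝ) * B 0 := by
    have hcong : ∀ i ∈ Finset.range m, (if 1 ≤ i then B 0 else 0)
        = B 0 - (if i = 0 then B 0 else 0) := by
      intro i _
      by_cases h : i = 0
      · rw [if_pos h, if_neg (show ¬1 ≤ i by omega)]; ring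
      · rw [if_neg h, if_pos (show 1 ≤ i by omega)]; ring
    rw [Finset.sum_congr rfl hcong, Finset.sum_sub_distrib, Finset.sum_const,
      Finset.sum_ite_eq' (Finset.range m) 0 (fun _ => B 0),
      if_pos (Finset.mem_range.mpr h0), Finset.card_range, nsmul_eq_mul]
    ring
  rw [s1, s2]
  have hC : C ⟨0, h0⟩ ⟨m - 1, hm1⟩ = B 0 := (hB' 0 h0).symm
  rw [hC]
  ring
end
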